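/- arXiv:1905.03859 — 3 statements merged into one kernel-verified Lean document; each statement's English description precedes it below -/
import Mathlib

section
/- Let A, B, C, D be mutually distinct points of L. Then any two of the three relations [B,A,C], [C,A,D], [D,A,B] exclude the third; that is: ([B,A,C] and [C,A,D]) implies not [D,A,B]; ([B,A,C] and [D,A,B]) implies not [C,A,D]; and ([C,A,D] and [D,A,B]) implies not [B,A,C]. -/
/-- For mutually distinct points `A, B, C, D` of an ordered line `L`
(satisfying axioms Lo.1–Lo.4), any two of the relations `[B,A,C]`, `[C,A,D]`,
`[D,A,B]` exclude the third. -/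
theorem two_exclude_third {L : Type*} (btw : L → L → L → Prop)
    (lo1 : ∀ A B C : L, btw A B C → btw C B A)
    (lo2 : ∀ A B C : L, A ≠ B → B ≠ C → A ≠ C →
      (btw A B C ∧ ¬ btw B C A ∧ ¬ btw C A B) ∨
      (¬ btw A B C ∧ btw B C A ∧ ¬ btw C A B) ∨
      (¬ btw A B C ∧ ¬ btw B C A ∧ btw C A B))
    (lo3 : ∀ A B C D : L, btw A B C → btw B C D → btw A B D ∧ btw A C D)
    (lo4 : ∀ A B C D : L, btw A B C → btw C B D → btw D A B ∨ btw A D B)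
    (A B C D : L)
    (hAB : A ≠ B) (hAC : A ≠ C) (hAD : A ≠ D)
    (hBC : B ≠ C) (hBD : B ≠ D) (hCD : C ≠ D) :
    (btw B A C → btw C A D → ¬ btw D A B) ∧
    (btw B A C → btw D A B → ¬ btw C A D) ∧
    (btw C A D → btw D A B → ¬ btw B A C) := by
  have key : btw B A C → btw C A D → btw D A B → False := by
    intro h1 h2 h3
    -- lo4 with middle A: from [B,A,C] and [C,A,D] get [D,B,A] ∨ [B,D,A]
    have h4 := lo4 B A C D h1 h2
    -- exactly one of the orderings of D,A,B holds; btw D A B holds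
    have htr := lo2 D A B hAD.symm hAB hBD.symm
    rcases htr with ⟨_, hn1, hn2⟩ | ⟨hn, _, _⟩ | ⟨hn, _, _⟩
    · rcases h4 with h | h
      · exact hn1 (lo1 D B A h)
      · exact hn2 h
    · exact hn h3
    · exact hn h3
  exact ⟨fun h1 h2 h3 => key h1 h2 h3,
         fun h1 h3 h2 => key h1 h2 h3,
         fun h2 h3 h1 => key h1 h2 h3⟩
end

section
/- For mutually distinct points A, B, C, D of L: if B and C lie on the same side of A, and C and D lie on the same side of A, then B and D lie on the same side of A. -/
/-- `P` and `Q` lie on the same side of `A`: exactly one of `[A,P,Q]`, `[A,Q,P]`. -/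
def SameSide {L : Type*} (btw : L → L → L → Prop) (A P Q : L) : Prop :=
  (btw A P Q ∧ ¬ btw A Q P) ∨ (¬ btw A P Q ∧ btw A Q P)

/-- For mutually distinct points `A, B, C, D` of an ordered line `L`:
if `B` and `C` lie on the same side of `A`, and `C` and `D` lie on the same side
of `A`, then `B` and `D` lie on the same side of `A`. -/
theorem sameSide_trans {L : Type*} (btw : L → L → L → Prop)
    (lo1 : ∀ A B C : L, btw A B C → btw C B A)
    (lo2 : ∀ A B C : L, A ≠ B → B ≠ C → A ≠ C →
      (btw A B C ∧ ¬ btw B C A ∧ ¬ btw C A B) ∨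
      (¬ btw A B C ∧ btw B C A ∧ ¬ btw C A B) ∨
      (¬ btw A B C ∧ ¬ btw B C A ∧ btw C A B))
    (lo3 : ∀ A B C D : L, btw A B C → btw B C D → btw A B D ∧ btw A C D)
    (lo4 : ∀ A B C D : L, btw A B C → btw C B D → btw D A B ∨ btw A D B)
    (A B C D : L)
    (hAB : A ≠ B) (hAC : A ≠ C) (hAD : A ≠ D)
    (hBC : B ≠ C) (hBD : B ≠ D) (hCD : C ≠ D)
    (h1 : SameSide btw A B C) (h2 : SameSide btw A C D) :
    SameSide btw A B D := by
  suffices h : btw A B D ∨ btw A D B by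
    rcases lo2 A B D hAB hBD hAD with ⟨p1, p2, p3⟩ | ⟨p1, p2, p3⟩ | ⟨p1, p2, p3⟩
    · exact Or.inl ⟨p1, fun hc => p2 (lo1 _ _ _ hc)⟩
    · exact Or.inr ⟨p1, lo1 _ _ _ p2⟩
    · rcases h with h | h
      · exact absurd h p1
      · exact absurd (lo1 _ _ _ h) p2
  have triABC := lo2 A B C hAB hBC hAC
  have triACD := lo2 A C D hAC hCD hAD
  rcases h1 with ⟨hbc, hncb⟩ | ⟨hnbc, hcb⟩ <;> rcases h2 with ⟨hcd, hndc⟩ | ⟨hncd, hdc⟩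
  · -- btw A B C, btw A C D
    rcases lo2 B C D hBC hCD hBD with ⟨q1, _, _⟩ | ⟨_, q2, _⟩ | ⟨_, _, q3⟩
    · exact Or.inl (lo3 A B C D hbc q1).1
    · -- q2 : btw C D B
      have h1' : btw B D C := lo1 _ _ _ q2
      have h2' : btw D C A := lo1 _ _ _ hcd
      have := (lo3 B D C A h1' h2').2
      rcases triABC with ⟨_, nb, _⟩ | ⟨nb, _, _⟩ | ⟨nb, _, _⟩ <;>
        first | exact absurd this nb | exact absurd hbc nb
    · -- q3 : btw D B C
      have h1' : btw C B D := lo1 _ _ _ q3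
      rcases lo4 A B C D hbc h1' with hdab | hadb
      · have := (lo3 D A B C hdab hbc).1
        rcases triACD with ⟨_, _, nc⟩ | ⟨nc, _, _⟩ | ⟨nc, _, _⟩ <;>
          first | exact absurd this nc | exact absurd hcd nc
      · exact Or.inr hadb
  · -- btw A B C, btw A D C
    rcases lo2 A B D hAB hBD hAD with ⟨p1, _, _⟩ | ⟨_, p2, _⟩ | ⟨_, _, p3⟩
    · exact Or.inl p1
    · exact Or.inr (lo1 _ _ _ p2)
    · -- p3 : btw D A B
      have hBAD : btw B A D := lo1 _ _ _ p3
      have hBAC : btw B A C := (lo3 B A D C hBAD hdc).1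
      have hCAB : btw C A B := lo1 _ _ _ hBAC
      rcases triABC with ⟨_, _, nc⟩ | ⟨nc, _, _⟩ | ⟨nc, _, _⟩ <;>
        first | exact absurd hCAB nc | exact absurd hbc nc
  · -- btw A C B, btw A C D
    rcases lo2 A B D hAB hBD hAD with ⟨p1, _, _⟩ | ⟨_, p2, _⟩ | ⟨p1, p2, p3⟩
    · exact Or.inl p1
    · exact Or.inr (lo1 _ _ _ p2)
    · -- p3 : btw D A B
      have hBCA : btw B C A := lo1 _ _ _ hcb
      rcases lo4 B C A D hBCA hcd with hdbc | hbdc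
      · exact absurd (lo1 _ _ _ (lo3 D B C A hdbc hBCA).1) p1
      · exact absurd (lo3 B D C A hbdc (lo1 _ _ _ hcd)).1 p2
  · -- btw A C B, btw A D C
    rcases lo2 D C B hCD.symm hBC.symm hBD.symm with ⟨q1, _, _⟩ | ⟨_, q2, _⟩ | ⟨_, _, q3⟩
    · exact Or.inr (lo3 A D C B hdc q1).1
    · -- q2 : btw C B D
      have h1' : btw D B C := lo1 _ _ _ q2
      have h2' : btw B C A := lo1 _ _ _ hcb
      have hDCA := (lo3 D B C A h1' h2').2
      have triADC := lo2 A D C hAD hCD.symm hAC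
      rcases triADC with ⟨_, nc, _⟩ | ⟨nc, _, _⟩ | ⟨nc, _, _⟩ <;>
        first | exact absurd hDCA nc | exact absurd hdc nc
    · -- q3 : btw B D C
      have h1' : btw C D B := lo1 _ _ _ q3
      rcases lo4 A D C B hdc h1' with hbad | habd
      · have hBAC : btw B A C := (lo3 B A D C hbad hdc).1
        have triACB := lo2 A C B hAC hBC.symm hAB
        rcases triACB with ⟨_, _, nc⟩ | ⟨nc, _, _⟩ | ⟨nc, _, _⟩ <;>
          first | exact absurd hBAC nc | exact absurd hcb nc
      · exact Or.inl habd
end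

section
/- For mutually distinct points A, B, C, D of L, if [A,D,C] and [A,B,C] hold, then [A,B,D] or [A,D,B] holds. -/
/-- For mutually distinct points `A, B, C, D` of an ordered line `L`,
if `[A,D,C]` and `[A,B,C]` hold, then `[A,B,D]` or `[A,D,B]` holds. -/
theorem btw_ABD_or_ADB {L : Type*} (btw : L → L → L → Prop)
    (lo1 : ∀ A B C : L, btw A B C → btw C B A)
    (lo2 : ∀ A B C : L, A ≠ B → B ≠ C → A ≠ C →
      (btw A B C ∧ ¬ btw B C A ∧ ¬ btw C A B) ∨
      (¬ btw A B C ∧ btw B C A ∧ ¬ btw C A B) ∨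
      (¬ btw A B C ∧ ¬ btw B C A ∧ btw C A B))
    (lo3 : ∀ A B C D : L, btw A B C → btw B C D → btw A B D ∧ btw A C D)
    (lo4 : ∀ A B C D : L, btw A B C → btw C B D → btw D A B ∨ btw A D B)
    (A B C D : L)
    (hAB : A ≠ B) (hAC : A ≠ C) (hAD : A ≠ D)
    (hBC : B ≠ C) (hBD : B ≠ D) (hCD : C ≠ D)
    (h1 : btw A D C) (h2 : btw A B C) :
    btw A B D ∨ btw A D B := by
  have hnDAB : ¬ btw D A B := by
    intro h
    have hBAD := lo1 _ _ _ h
    have hBAC := (lo3 B A D C hBAD h1).1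
    have hCAB := lo1 _ _ _ hBAC
    rcases lo2 A B C hAB hBC hAC with ⟨_, _, hn⟩ | ⟨hn, _, _⟩ | ⟨hn, _, _⟩
    · exact hn hCAB
    · exact hn h2
    · exact hn h2
  rcases lo2 A B D hAB hBD hAD with ⟨h, _, _⟩ | ⟨_, h, _⟩ | ⟨_, _, h⟩
  · exact Or.inl h
  · exact Or.inr (lo1 _ _ _ h)
  · exact absurd h hnDAB
end
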